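/- Let κ > 1 and let π be a probability measure on 𝒳×{−1,1} such that P(|2η(X)−1| ≤ t) ≤ c₁ t^{1/(κ−1)} for all t > 0, for some constant c₁ > 0. Then for every measurable function f:𝒳→[−1,1], A(f) − A* ≥ ((κ−1)/(2c₁κ))^{κ−1} κ^{−1} (E[|f(X)−f*(X)|])^{κ}. -/

import Mathlib

/-!
Given `X = x`, the hinge loss of a prediction `v ∈ [-1, 1]` has expectation
`1 - v (2η(x) - 1)`, which is minimal at the Bayes value `sgn (2η(x) - 1)`; hence
`A(f) - A* = E[|2η - 1| |f - f*|]`. Splitting `E|f - f*|` over the event `{|2η - 1| ≤ t}`,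
whose probability the margin condition controls, and its complement, on which
`|f - f*| ≤ t⁻¹ |2η - 1| |f - f*|`, gives `E|f - f*| ≤ 2 c₁ t^(1/(κ-1)) + t⁻¹ (A(f) - A*)`
for every `t > 0`. The choice `t = ((κ - 1) E|f - f*| / (2 c₁ κ))^(κ-1)` yields the bound.
-/

open MeasureTheory
open scoped ENNReal NNReal

noncomputable section

namespace AggClass

variable {X : Type*} [MeasurableSpace X]

/-- The sign function, with the convention `sgn 0 = 1`. -/
def sgn (t : ℝ) : ℝ := if 0 ≤ t then 1 else -1

/-- The Bayes rule `f*(x) = sign (2 η x - 1)`. -/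
def bayes (η : X → ℝ) : X → ℝ := fun x => sgn (2 * η x - 1)

/-- The hinge risk `A(f) = E[max (1 - Y f(X)) 0]`, as an extended nonnegative real. -/
def hingeRiskE (π : Measure (X × ℝ)) (f : X → ℝ) : ℝ≥0∞ :=
  ∫⁻ p, ENNReal.ofReal (max (1 - p.2 * f p.1) 0) ∂π

/-- The optimal hinge risk `A* = inf {A(f) : f : X → ℝ measurable}`. -/
def optHingeRiskE (π : Measure (X × ℝ)) : ℝ≥0∞ :=
  ⨅ (f : X → ℝ) (_ : Measurable f), hingeRiskE π f

/-- The hinge risk, real-valued. -/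
def hingeRisk (π : Measure (X × ℝ)) (f : X → ℝ) : ℝ := (hingeRiskE π f).toReal

/-- The optimal hinge risk, real-valued. -/
def optHingeRisk (π : Measure (X × ℝ)) : ℝ := (optHingeRiskE π).toReal

/-- The misclassification risk `R(f) = π (Y ≠ sign (f X))`, ℝ≥0∞-valued. -/
def misRiskE (π : Measure (X × ℝ)) (f : X → ℝ) : ℝ≥0∞ :=
  π {p : X × ℝ | p.2 ≠ sgn (f p.1)}

/-- The misclassification risk, real-valued. -/
def misRisk (π : Measure (X × ℝ)) (f : X → ℝ) : ℝ := (misRiskE π f).toReal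

/-- `π` is a joint law of a pair (X,Y) on `X × {-1,1}` with regression function
`η x = π(Y = 1 ∣ X = x)`. -/
structure IsClassif (π : Measure (X × ℝ)) (η : X → ℝ) : Prop where
  labels : π {p : X × ℝ | p.2 = 1 ∨ p.2 = -1}ᶜ = 0
  meas : Measurable η
  mem01 : ∀ x, η x ∈ Set.Icc (0 : ℝ) 1
  cond : ∀ B : Set X, MeasurableSet B →
    π (B ×ˢ ({1} : Set ℝ)) = ∫⁻ x in B, ENNReal.ofReal (η x) ∂(π.map Prod.fst)

/-- Margin assumption MA(κ) with constant c₀ : for every measurable prediction rule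
`f : X → {-1,1}`, `E[|f(X) - f*(X)|] ≤ c₀ (R(f) - R*)^(1/κ)`. -/
def MA (π : Measure (X × ℝ)) (η : X → ℝ) (κ c₀ : ℝ) : Prop :=
  ∀ f : X → ℝ, Measurable f → (∀ x, f x = 1 ∨ f x = -1) →
    ∫ x, |f x - bayes η x| ∂(π.map Prod.fst)
      ≤ c₀ * (misRisk π f - misRisk π (bayes η)) ^ (1 / κ)

/-- Margin assumption for the hinge risk MAH(κ) with constant c : for every measurable
`f : X → [-1,1]`, `E[|f(X) - f*(X)|] ≤ c (A(f) - A*)^(1/κ)`. -/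
def MAH (π : Measure (X × ℝ)) (η : X → ℝ) (κ c : ℝ) : Prop :=
  ∀ f : X → ℝ, Measurable f → (∀ x, f x ∈ Set.Icc (-1 : ℝ) 1) →
    ∫ x, |f x - bayes η x| ∂(π.map Prod.fst)
      ≤ c * (hingeRisk π f - optHingeRisk π) ^ (1 / κ)

/-- Convex combination of f₁,…,f_M with weights w. -/
def convComb {M : ℕ} (f : Fin M → X → ℝ) (w : Fin M → ℝ) : X → ℝ :=
  fun x => ∑ j, w j * f j x

/-- The set of hinge risks of the elements of the convex hull of f₁,…,f_M. -/
def convRiskSet (π : Measure (X × ℝ)) {M : ℕ} (f : Fin M → X → ℝ) : Set ℝ :=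
  {a | ∃ w : Fin M → ℝ, (∀ j, 0 ≤ w j) ∧ (∑ j, w j) = 1 ∧ a = hingeRisk π (convComb f w)}

/-- The law of an i.i.d. sample of size n from π. -/
def sample {α : Type*} [MeasurableSpace α] (π : Measure α) [SigmaFinite π] (n : ℕ) :
    Measure (Fin n → α) :=
  Measure.pi fun _ => π

/-- The empirical hinge risk on the sample D. -/
def empHinge {n : ℕ} (D : Fin n → X × ℝ) (f : X → ℝ) : ℝ :=
  (n : ℝ)⁻¹ * ∑ i, max (1 - (D i).2 * f (D i).1) 0

/-- The empirical misclassification risk on the sample D. -/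
def empMis {n : ℕ} (D : Fin n → X × ℝ) (f : X → ℝ) : ℝ :=
  (n : ℝ)⁻¹ * ∑ i, if (D i).2 ≠ f (D i).1 then (1 : ℝ) else 0

/-- The set of indices minimizing the empirical hinge risk. -/
def ermSet {n M : ℕ} (f : Fin M → X → ℝ) (D : Fin n → X × ℝ) : Finset (Fin M) :=
  Finset.univ.filter fun j => ∀ k, empHinge D (f j) ≤ empHinge D (f k)

/-- `tf` is an empirical risk minimization (ERM) aggregate for the hinge loss. -/
def IsERM {n M : ℕ} (f : Fin M → X → ℝ) (tf : (Fin n → X × ℝ) → X → ℝ) : Prop :=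
  ∀ D, ∃ j ∈ ermSet f D, tf D = f j

/-- `tf` is the averaged ERM (AERM) aggregate for the hinge loss. -/
def IsAERM {n M : ℕ} (f : Fin M → X → ℝ) (tf : (Fin n → X × ℝ) → X → ℝ) : Prop :=
  ∀ D, tf D = fun x => ((ermSet f D).card : ℝ)⁻¹ * ∑ j ∈ ermSet f D, f j x

/-- The exponential weights for the hinge loss. -/
def aewWeight {n M : ℕ} (f : Fin M → X → ℝ) (D : Fin n → X × ℝ) (j : Fin M) : ℝ :=
  Real.exp (-(n : ℝ) * empHinge D (f j)) / ∑ k, Real.exp (-(n : ℝ) * empHinge D (f k))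

/-- `tf` is the aggregation-with-exponential-weights (AEW) aggregate for the hinge loss. -/
def IsAEW {n M : ℕ} (f : Fin M → X → ℝ) (tf : (Fin n → X × ℝ) → X → ℝ) : Prop :=
  ∀ D, tf D = fun x => ∑ j, aewWeight f D j * f j x

/-- Empirical hinge risk on the first k observations of the sample D. -/
def empHingeK {n : ℕ} (D : Fin n → X × ℝ) (k : ℕ) (f : X → ℝ) : ℝ :=
  (k : ℝ)⁻¹ * ∑ i ∈ Finset.univ.filter (fun i : Fin n => (i : ℕ) < k),
    max (1 - (D i).2 * f (D i).1) 0

/-- The cumulative exponential weights for the hinge loss. -/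
def caewWeight {n M : ℕ} (f : Fin M → X → ℝ) (D : Fin n → X × ℝ) (j : Fin M) : ℝ :=
  (n : ℝ)⁻¹ * ∑ k ∈ Finset.Icc 1 n,
    Real.exp (-(k : ℝ) * empHingeK D k (f j)) /
      ∑ l, Real.exp (-(k : ℝ) * empHingeK D k (f l))

lemma sgn_mem_Icc (t : ℝ) : sgn t ∈ Set.Icc (-1 : ℝ) 1 := by
  unfold sgn; split_ifs <;> norm_num

lemma sgn_mul_self (t : ℝ) : sgn t * t = |t| := by
  unfold sgn
  split_ifs with h
  · rw [one_mul, abs_of_nonneg h]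
  · rw [neg_one_mul, abs_of_neg (not_le.1 h)]

@[fun_prop]
lemma measurable_bayes {η : X → ℝ} (hη : Measurable η) : Measurable (bayes η) :=
  (Measurable.ite (measurableSet_le measurable_const measurable_id) measurable_const
    measurable_const).comp ((hη.const_mul 2).sub measurable_const)

/-- The expected hinge loss `max (1 - Y v) 0` of the prediction `v` when `Y = 1` with
probability `a` and `Y = -1` otherwise. -/
def condHingeRisk (a v : ℝ) : ℝ := a * max (1 - v) 0 + (1 - a) * max (1 + v) 0

@[fun_prop]
lemma measurable_condHingeRisk {α : Type*} [MeasurableSpace α] {a v : α → ℝ}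
    (ha : Measurable a) (hv : Measurable v) : Measurable fun x => condHingeRisk (a x) (v x) := by
  unfold condHingeRisk
  fun_prop

section CondHingeRisk

variable {a v : ℝ}

lemma condHingeRisk_nonneg (ha : a ∈ Set.Icc (0 : ℝ) 1) (v : ℝ) : 0 ≤ condHingeRisk a v :=
  add_nonneg (mul_nonneg ha.1 (le_max_right _ _))
    (mul_nonneg (sub_nonneg.2 ha.2) (le_max_right _ _))

lemma condHingeRisk_of_mem_Icc (a : ℝ) (hv : v ∈ Set.Icc (-1 : ℝ) 1) :
    condHingeRisk a v = 1 - v * (2 * a - 1) := by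
  rw [condHingeRisk, max_eq_left (by linarith [hv.2]), max_eq_left (by linarith [hv.1])]
  ring

lemma condHingeRisk_le_two (ha : a ∈ Set.Icc (0 : ℝ) 1) (hv : v ∈ Set.Icc (-1 : ℝ) 1) :
    condHingeRisk a v ≤ 2 := by
  rw [condHingeRisk_of_mem_Icc a hv]
  nlinarith [mul_nonneg (neg_le_iff_add_nonneg.1 hv.1) ha.1,
    mul_nonneg (sub_nonneg.2 hv.2) (sub_nonneg.2 ha.2)]

lemma condHingeRisk_sgn (a : ℝ) : condHingeRisk a (sgn (2 * a - 1)) = 1 - |2 * a - 1| := by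
  rw [condHingeRisk_of_mem_Icc a (sgn_mem_Icc _), sgn_mul_self]

lemma condHingeRisk_sgn_le (ha : a ∈ Set.Icc (0 : ℝ) 1) (v : ℝ) :
    condHingeRisk a (sgn (2 * a - 1)) ≤ condHingeRisk a v := by
  rw [condHingeRisk_sgn, condHingeRisk]
  have := le_max_left (1 - v) 0
  have := le_max_left (1 + v) 0
  rcases abs_cases (2 * a - 1) with ⟨he, hs⟩ | ⟨he, hs⟩ <;> rw [he]
  · nlinarith [mul_nonneg (by linarith : (0:ℝ) ≤ 2 * a - 1) (le_max_right (1 - v) 0),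
      mul_nonneg (sub_nonneg.2 ha.2) (by linarith : (0:ℝ) ≤ max (1 - v) 0 + max (1 + v) 0 - 2)]
  · nlinarith [mul_nonneg (by linarith : (0:ℝ) ≤ 1 - 2 * a) (le_max_right (1 + v) 0),
      mul_nonneg ha.1 (by linarith : (0:ℝ) ≤ max (1 - v) 0 + max (1 + v) 0 - 2)]

lemma condHingeRisk_sub_sgn (a : ℝ) (hv : v ∈ Set.Icc (-1 : ℝ) 1) :
    condHingeRisk a v - condHingeRisk a (sgn (2 * a - 1))
      = |2 * a - 1| * |v - sgn (2 * a - 1)| := by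
  rw [condHingeRisk_of_mem_Icc a hv, condHingeRisk_sgn]
  unfold sgn
  split_ifs with h
  · rw [abs_of_nonneg h, abs_of_nonpos (by linarith [hv.2])]; ring
  · rw [abs_of_neg (not_le.1 h), abs_of_nonneg (by linarith [hv.1])]; ring

end CondHingeRisk

lemma restrict_snd_eq_apply (ν : Measure (X × ℝ)) (y : ℝ) {s : Set (X × ℝ)}
    (hs : MeasurableSet s) :
    ν.restrict {p | p.2 = y} s = ν (((fun x => (x, y)) ⁻¹' s) ×ˢ {y}) := by
  rw [Measure.restrict_apply hs]
  congr 1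
  ext ⟨x, z⟩
  simp only [Set.mem_inter_iff, Set.mem_ofPred_eq, Set.mem_prod, Set.mem_preimage,
    Set.mem_singleton_iff]
  constructor
  · rintro ⟨hs, rfl⟩; exact ⟨hs, rfl⟩
  · rintro ⟨hs, rfl⟩; exact ⟨hs, rfl⟩

namespace IsClassif

variable {π : Measure (X × ℝ)} {η : X → ℝ}

lemma restrict_label_add (hπ : IsClassif π η) :
    π.restrict {p | p.2 = 1} + π.restrict {p | p.2 = -1} = π := by
  have hdisj : Disjoint {p : X × ℝ | p.2 = 1} {p | p.2 = -1} :=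
    Set.disjoint_left.2 fun p (h1 : p.2 = 1) (h2 : p.2 = -1) => by norm_num [h1] at h2
  rw [← Measure.restrict_union hdisj (measurable_snd (measurableSet_singleton _)),
    ← Set.ofPred_or, Measure.restrict_eq_self_of_ae_mem (ae_iff.2 hπ.labels)]

lemma measure_fst_preimage (hπ : IsClassif π η) {B : Set X} (hB : MeasurableSet B) :
    π (Prod.fst ⁻¹' B) = π (B ×ˢ {1}) + π (B ×ˢ {-1}) := by
  conv_lhs => rw [← hπ.restrict_label_add]
  rw [Measure.add_apply, restrict_snd_eq_apply _ _ (measurable_fst hB),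
    restrict_snd_eq_apply _ _ (measurable_fst hB)]
  rfl

lemma restrict_label_one (hπ : IsClassif π η) :
    π.restrict {p | p.2 = 1}
      = ((π.map Prod.fst).withDensity fun x => ENNReal.ofReal (η x)).map fun x => (x, 1) := by
  ext s hs
  have hB : MeasurableSet ((fun x => (x, (1 : ℝ))) ⁻¹' s) := measurable_prodMk_right hs
  rw [restrict_snd_eq_apply π 1 hs, Measure.map_apply measurable_prodMk_right hs,
    withDensity_apply _ hB, hπ.cond _ hB]

lemma restrict_label_neg_one [IsFiniteMeasure π] (hπ : IsClassif π η) :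
    π.restrict {p | p.2 = -1}
      = ((π.map Prod.fst).withDensity fun x => ENNReal.ofReal (1 - η x)).map
          fun x => (x, -1) := by
  ext s hs
  set B := (fun x => (x, (-1 : ℝ))) ⁻¹' s
  have hB : MeasurableSet B := measurable_prodMk_right hs
  rw [restrict_snd_eq_apply π (-1) hs, Measure.map_apply measurable_prodMk_right hs,
    withDensity_apply _ hB]
  -- both sides are what remains of `π (Prod.fst ⁻¹' B)` after removing `π (B ×ˢ {1})`
  have hsplit : ∫⁻ x in B, ENNReal.ofReal (η x) ∂(π.map Prod.fst)
      + ∫⁻ x in B, ENNReal.ofReal (1 - η x) ∂(π.map Prod.fst) = π (Prod.fst ⁻¹' B) := by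
    rw [← lintegral_add_left hπ.meas.ennreal_ofReal, ← Measure.map_apply measurable_fst hB,
      ← setLIntegral_one]
    refine setLIntegral_congr_fun hB fun x _ => ?_
    rw [← ENNReal.ofReal_add (hπ.mem01 x).1 (sub_nonneg.2 (hπ.mem01 x).2), add_sub_cancel,
      ENNReal.ofReal_one]
  rw [hπ.measure_fst_preimage hB, ← hπ.cond B hB] at hsplit
  exact ((ENNReal.add_right_inj (measure_ne_top π _)).1 hsplit).symm

lemma lintegral_eq [IsFiniteMeasure π] (hπ : IsClassif π η) {G : X × ℝ → ℝ≥0∞}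
    (hG : Measurable G) :
    ∫⁻ p, G p ∂π = ∫⁻ x, (ENNReal.ofReal (η x) * G (x, 1)
      + ENNReal.ofReal (1 - η x) * G (x, -1)) ∂(π.map Prod.fst) := by
  have hG₁ : Measurable fun x => G (x, 1) := hG.comp measurable_prodMk_right
  have hG₂ : Measurable fun x => G (x, -1) := hG.comp measurable_prodMk_right
  conv_lhs => rw [← hπ.restrict_label_add]
  rw [lintegral_add_measure, hπ.restrict_label_one, hπ.restrict_label_neg_one,
    lintegral_map hG measurable_prodMk_right, lintegral_map hG measurable_prodMk_right,
    lintegral_withDensity_eq_lintegral_mul _ hπ.meas.ennreal_ofReal hG₁,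
    lintegral_withDensity_eq_lintegral_mul _ (hπ.meas.const_sub 1).ennreal_ofReal hG₂,
    ← lintegral_add_left (hπ.meas.ennreal_ofReal.mul hG₁)]
  rfl

lemma hingeRiskE_eq_lintegral [IsFiniteMeasure π] (hπ : IsClassif π η) {f : X → ℝ}
    (hf : Measurable f) :
    hingeRiskE π f
      = ∫⁻ x, ENNReal.ofReal (condHingeRisk (η x) (f x)) ∂(π.map Prod.fst) := by
  rw [hingeRiskE, hπ.lintegral_eq (by fun_prop)]
  refine lintegral_congr fun x => ?_
  have hη := hπ.mem01 x
  rw [← ENNReal.ofReal_mul hη.1, ← ENNReal.ofReal_mul (sub_nonneg.2 hη.2),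
    ← ENNReal.ofReal_add (mul_nonneg hη.1 (le_max_right _ _))
      (mul_nonneg (sub_nonneg.2 hη.2) (le_max_right _ _)), condHingeRisk]
  simp only [one_mul, neg_one_mul, sub_neg_eq_add]

lemma hingeRisk_eq_integral [IsFiniteMeasure π] (hπ : IsClassif π η) {f : X → ℝ}
    (hf : Measurable f) :
    hingeRisk π f = ∫ x, condHingeRisk (η x) (f x) ∂(π.map Prod.fst) := by
  rw [hingeRisk, hπ.hingeRiskE_eq_lintegral hf, integral_eq_lintegral_of_nonneg_ae
    (ae_of_all _ fun x => condHingeRisk_nonneg (hπ.mem01 x) _)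
    (measurable_condHingeRisk hπ.meas hf).aestronglyMeasurable]

lemma optHingeRiskE_eq_hingeRiskE_bayes [IsFiniteMeasure π] (hπ : IsClassif π η) :
    optHingeRiskE π = hingeRiskE π (bayes η) := by
  refine le_antisymm (iInf₂_le _ (measurable_bayes hπ.meas)) (le_iInf₂ fun g hg => ?_)
  rw [hπ.hingeRiskE_eq_lintegral hg, hπ.hingeRiskE_eq_lintegral (measurable_bayes hπ.meas)]
  exact lintegral_mono fun x =>
    ENNReal.ofReal_le_ofReal (condHingeRisk_sgn_le (hπ.mem01 x) (g x))

lemma hingeRisk_sub_optHingeRisk [IsFiniteMeasure π] (hπ : IsClassif π η) {f : X → ℝ}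
    (hf : Measurable f) (hval : ∀ x, f x ∈ Set.Icc (-1 : ℝ) 1) :
    hingeRisk π f - optHingeRisk π
      = ∫ x, |2 * η x - 1| * |f x - bayes η x| ∂(π.map Prod.fst) := by
  have hint : ∀ g : X → ℝ, Measurable g → (∀ x, g x ∈ Set.Icc (-1 : ℝ) 1) →
      Integrable (fun x => condHingeRisk (η x) (g x)) (π.map Prod.fst) := fun g hg hgval =>
    Integrable.of_bound (measurable_condHingeRisk hπ.meas hg).aestronglyMeasurable 2
      (ae_of_all _ fun x => by
        rw [Real.norm_of_nonneg (condHingeRisk_nonneg (hπ.mem01 x) _)]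
        exact condHingeRisk_le_two (hπ.mem01 x) (hgval x))
  have hbayes := measurable_bayes hπ.meas
  rw [optHingeRisk, hπ.optHingeRiskE_eq_hingeRiskE_bayes, ← hingeRisk,
    hπ.hingeRisk_eq_integral hf, hπ.hingeRisk_eq_integral hbayes,
    ← integral_sub (hint f hf hval) (hint _ hbayes fun x => sgn_mem_Icc _)]
  exact integral_congr_ae (ae_of_all _ fun x => condHingeRisk_sub_sgn (η x) (hval x))

end IsClassif

section Margin

variable {μ : Measure X} [IsFiniteMeasure μ] {a g : X → ℝ}

lemma integral_le_mul_measure_add_inv_mul_integral {B t : ℝ} (ha : Measurable a)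
    (ha0 : ∀ x, 0 ≤ a x) (hgm : AEStronglyMeasurable g μ) (hg : ∀ x, g x ∈ Set.Icc 0 B)
    (hag : Integrable (fun x => a x * g x) μ) (ht : 0 < t) :
    ∫ x, g x ∂μ ≤ B * (μ {x | a x ≤ t}).toReal + t⁻¹ * ∫ x, a x * g x ∂μ := by
  set S := {x | a x ≤ t}
  have hS : MeasurableSet S := measurableSet_le ha measurable_const
  have hgi : Integrable g μ := Integrable.of_bound hgm B (ae_of_all _ fun x => by
    rw [Real.norm_of_nonneg (hg x).1]; exact (hg x).2)
  have hsmall : ∫ x in S, g x ∂μ ≤ B * (μ S).toReal :=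
    calc ∫ x in S, g x ∂μ ≤ ∫ _ in S, B ∂μ :=
          setIntegral_mono_on hgi.integrableOn (integrable_const B).integrableOn hS
            fun x _ => (hg x).2
      _ = B * (μ S).toReal := by rw [setIntegral_const, smul_eq_mul, mul_comm]; rfl
  have hlarge : ∫ x in Sᶜ, g x ∂μ ≤ t⁻¹ * ∫ x, a x * g x ∂μ :=
    calc ∫ x in Sᶜ, g x ∂μ ≤ ∫ x in Sᶜ, t⁻¹ * (a x * g x) ∂μ :=
          setIntegral_mono_on hgi.integrableOn (hag.const_mul _).integrableOn hS.compl
            fun x hx => by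
              rw [← div_eq_inv_mul, le_div_iff₀ ht]
              nlinarith [(hg x).1, not_le.1 (show ¬a x ≤ t from hx)]
      _ = t⁻¹ * ∫ x in Sᶜ, a x * g x ∂μ := integral_const_mul _ _
      _ ≤ t⁻¹ * ∫ x, a x * g x ∂μ := mul_le_mul_of_nonneg_left
          (setIntegral_le_integral hag (ae_of_all _ fun x => mul_nonneg (ha0 x) (hg x).1))
          (inv_nonneg.2 ht.le)
  rw [← integral_add_compl hS hgi]
  linarith

theorem rpow_integral_le_integral_mul_of_measure_le_rpow {κ c B : ℝ} (hκ : 1 < κ) (hc : 0 < c)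
    (hB : 0 < B) (ha : Measurable a) (ha0 : ∀ x, 0 ≤ a x) (hgm : AEStronglyMeasurable g μ)
    (hg : ∀ x, g x ∈ Set.Icc 0 B) (hag : Integrable (fun x => a x * g x) μ)
    (hmargin : ∀ t : ℝ, 0 < t → (μ {x | a x ≤ t}).toReal ≤ c * t ^ (1 / (κ - 1))) :
    ((κ - 1) / (B * c * κ)) ^ (κ - 1) * κ⁻¹ * (∫ x, g x ∂μ) ^ κ
      ≤ ∫ x, a x * g x ∂μ := by
  have hD : 0 ≤ ∫ x, a x * g x ∂μ := integral_nonneg fun x => mul_nonneg (ha0 x) (hg x).1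
  rcases (integral_nonneg fun x => (hg x).1 : 0 ≤ ∫ x, g x ∂μ).eq_or_lt with hE | hE
  · rw [← hE, Real.zero_rpow (by linarith), mul_zero]
    exact hD
  set E := ∫ x, g x ∂μ
  set D := ∫ x, a x * g x ∂μ
  have hκ₁ : 0 < κ - 1 := sub_pos.2 hκ
  set θ := (κ - 1) / (B * c * κ) with hθ_def
  have hθ : 0 < θ := div_pos hκ₁ (by positivity)
  -- chosen so that the margin term `B c t^(1/(κ-1))` equals `(1 - 1/κ) E`
  set t := (θ * E) ^ (κ - 1) with ht_def
  have ht : 0 < t := by positivity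
  have hmargin_t : B * (c * t ^ (1 / (κ - 1))) = (κ - 1) / κ * E := by
    rw [← Real.rpow_mul (by positivity), mul_one_div_cancel hκ₁.ne', Real.rpow_one, hθ_def]
    field_simp
  have hsplit := integral_le_mul_measure_add_inv_mul_integral ha ha0 hgm hg hag ht
  have hEκ : E / κ ≤ t⁻¹ * D := by
    have := mul_le_mul_of_nonneg_left (hmargin t ht) hB.le
    have : E - (κ - 1) / κ * E = E / κ := by field_simp; ring
    linarith
  calc θ ^ (κ - 1) * κ⁻¹ * E ^ κ = t * (E / κ) := by
        rw [ht_def, Real.mul_rpow hθ.le hE.le, Real.rpow_sub_one hE.ne']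
        field_simp
    _ ≤ t * (t⁻¹ * D) := by gcongr
    _ = D := by field_simp

end Margin

/-- under the margin condition P(|2η(X)-1| ≤ t) ≤ c₁ t^{1/(κ-1)},
A(f) - A* ≥ ((κ-1)/(2c₁κ))^{κ-1} κ⁻¹ (E|f - f*|)^κ for all measurable f : X → [-1,1]. -/
theorem excess_hinge_lower_bound_of_margin
    (π : Measure (X × ℝ)) [IsProbabilityMeasure π] (η : X → ℝ)
    (hπ : IsClassif π η) (κ c₁ : ℝ) (hκ : 1 < κ) (hc₁ : 0 < c₁)
    (hmargin : ∀ t : ℝ, 0 < t →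
      ((π.map Prod.fst) {x | |2 * η x - 1| ≤ t}).toReal ≤ c₁ * t ^ (1 / (κ - 1)))
    (f : X → ℝ) (hf : Measurable f) (hval : ∀ x, f x ∈ Set.Icc (-1 : ℝ) 1) :
    ((κ - 1) / (2 * c₁ * κ)) ^ (κ - 1) * κ⁻¹ *
        (∫ x, |f x - bayes η x| ∂(π.map Prod.fst)) ^ κ
      ≤ hingeRisk π f - optHingeRisk π := by
  have hη := hπ.meas
  have hdist : ∀ x, |f x - bayes η x| ∈ Set.Icc (0 : ℝ) 2 := fun x => by
    have hbayes : bayes η x ∈ Set.Icc (-1 : ℝ) 1 := sgn_mem_Icc _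
    exact ⟨abs_nonneg _, abs_sub_le_iff.2 ⟨by linarith [(hval x).2, hbayes.1],
      by linarith [(hval x).1, hbayes.2]⟩⟩
  have habs_le_one : ∀ x, |2 * η x - 1| ≤ 1 := fun x =>
    abs_le.2 ⟨by linarith [(hπ.mem01 x).1], by linarith [(hπ.mem01 x).2]⟩
  have hint : Integrable (fun x => |2 * η x - 1| * |f x - bayes η x|) (π.map Prod.fst) :=
    Integrable.of_bound (by fun_prop) 2 (ae_of_all _ fun x => by
      rw [Real.norm_of_nonneg (by positivity)]
      linarith [mul_le_mul (habs_le_one x) (hdist x).2 (abs_nonneg _) zero_le_one])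
  rw [hπ.hingeRisk_sub_optHingeRisk hf hval]
  exact rpow_integral_le_integral_mul_of_measure_le_rpow hκ hc₁ two_pos (by fun_prop)
    (fun x => abs_nonneg _) (by fun_prop) hdist hint hmargin

end AggClass
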